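/- arXiv:2009.10137 — 5 statements merged into one kernel-verified Lean document; each statement's English description precedes it below -/
import Mathlib

section
/- Let G be a finite abelian group and V a faithful completely reducible G-module (over a finite field or as a finite abelian group with G acting by automorphisms such that V is a direct sum of irreducible G-submodules). Then there exists a vector x in V such that the stabilizer (centralizer) of x in G is trivial. -/
/-- A subgroup of `V` is `G`-invariant if it is closed under the action of `G`. -/
def IsGInvariant (G : Type*) {V : Type*} [Group G] [AddCommGroup V]
    [DistribMulAction G V] (W : AddSubgroup V) : Prop :=
  ∀ g : G, ∀ v ∈ W, g • v ∈ W

/-- A `G`-invariant subgroup is irreducible if it is nontrivial and has no proper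
nontrivial `G`-invariant subgroup. -/
def IsIrreducibleGSub (G : Type*) {V : Type*} [Group G] [AddCommGroup V]
    [DistribMulAction G V] (W : AddSubgroup V) : Prop :=
  W ≠ ⊥ ∧ ∀ U : AddSubgroup V, IsGInvariant G U → U ≤ W → U = ⊥ ∨ U = W

/-! Take a nonzero `xᵢ` in each irreducible summand `Wᵢ` and put `x = ∑ xᵢ`. If `g • x = x`, then
`g • xᵢ - xᵢ ∈ Wᵢ` sum to zero, so independence of the `Wᵢ` gives `g • xᵢ = xᵢ` for every `i`.
As `G` is abelian, the fixed points of `g` form a `G`-invariant subgroup; it meets each `Wᵢ` in the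
nonzero `xᵢ`, so by irreducibility it contains every `Wᵢ`, hence all of `V`, and faithfulness
gives `g = 1`. -/

theorem iSupIndep.eq_of_sum_eq_sum {ι V : Type*} [AddCommGroup V] {W : ι → AddSubgroup V}
    (hW : iSupIndep W) (s : Finset ι) (v w : ι → V) (hvw : ∀ i ∈ s, v i ∈ W i ∧ w i ∈ W i)
    (hs : ∑ i ∈ s, v i = ∑ i ∈ s, w i) : ∀ i ∈ s, v i = w i := by
  rw [← iSupIndep_map_orderIso_iff AddSubgroup.toIntSubmodule] at hW
  exact (iSupIndep_iff_finsetSum_eq_imp_eq _).1 hW s v w hvw hs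

theorem finite_of_iSupIndep_of_ne_bot {ι V : Type*} [AddCommGroup V] [Finite V]
    {W : ι → AddSubgroup V} (hW : iSupIndep W) (hne : ∀ i, W i ≠ ⊥) : Finite ι :=
  Finite.of_injective W (hW.injective hne)

def fixedAddSubgroup {M : Type*} (V : Type*) [Monoid M] [AddCommGroup V]
    [DistribMulAction M V] (m : M) : AddSubgroup V where
  carrier := {v | m • v = v}
  zero_mem' := smul_zero m
  add_mem' {a b} ha hb := by simp_all [smul_add]
  neg_mem' {a} ha := by simp_all [smul_neg]

@[simp]
theorem mem_fixedAddSubgroup {M V : Type*} [Monoid M] [AddCommGroup V] [DistribMulAction M V]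
    {m : M} {v : V} : v ∈ fixedAddSubgroup V m ↔ m • v = v :=
  Iff.rfl

section

variable {G V : Type*} [Group G] [AddCommGroup V] [DistribMulAction G V]

theorem IsGInvariant.inf {U W : AddSubgroup V} (hU : IsGInvariant G U) (hW : IsGInvariant G W) :
    IsGInvariant G (U ⊓ W) :=
  fun g v hv => ⟨hU g v hv.1, hW g v hv.2⟩

theorem eq_one_of_forall_le_fixedAddSubgroup [FaithfulSMul G V] {ι : Type*}
    {W : ι → AddSubgroup V} (hsup : ⨆ i, W i = ⊤)
    {g : G} (hg : ∀ i, W i ≤ fixedAddSubgroup V g) : g = 1 := by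
  have htop : fixedAddSubgroup V g = ⊤ := top_unique (hsup ▸ iSup_le hg)
  refine eq_of_smul_eq_smul fun v : V => ?_
  rw [one_smul, ← mem_fixedAddSubgroup, htop]
  exact AddSubgroup.mem_top v

theorem IsIrreducibleGSub.exists_ne_zero {W : AddSubgroup V} (hW : IsIrreducibleGSub G W) :
    ∃ x ∈ W, x ≠ 0 := by
  obtain ⟨⟨x, hx⟩, hx0⟩ := AddSubgroup.ne_bot_iff_exists_ne_zero.1 hW.1
  exact ⟨x, hx, fun h => hx0 (Subtype.ext h)⟩

theorem IsIrreducibleGSub.le_of_mem_of_ne_zero {W U : AddSubgroup V} (hW : IsIrreducibleGSub G W)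
    (hWinv : IsGInvariant G W) (hU : IsGInvariant G U) {x : V} (hxW : x ∈ W) (hxU : x ∈ U)
    (hx : x ≠ 0) : W ≤ U := by
  rcases hW.2 (W ⊓ U) (hWinv.inf hU) inf_le_left with hbot | heq
  · exact absurd (AddSubgroup.mem_bot.1 (hbot ▸ ⟨hxW, hxU⟩)) hx
  · exact inf_eq_left.1 heq

theorem iSupIndep.smul_eq_self_of_smul_sum_eq_sum {ι : Type*} {W : ι → AddSubgroup V}
    (hW : iSupIndep W) (hinv : ∀ i, IsGInvariant G (W i)) {x : ι → V} (hx : ∀ i, x i ∈ W i)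
    (s : Finset ι) {g : G} (hg : g • ∑ i ∈ s, x i = ∑ i ∈ s, x i) : ∀ i ∈ s, g • x i = x i := by
  rw [Finset.smul_sum] at hg
  exact hW.eq_of_sum_eq_sum s (fun i => g • x i) x (fun i _ => ⟨hinv i g _ (hx i), hx i⟩) hg

end

theorem isGInvariant_fixedAddSubgroup {G V : Type*} [CommGroup G] [AddCommGroup V]
    [DistribMulAction G V] (g : G) :
    IsGInvariant G (fixedAddSubgroup V g) := by
  intro h v hv
  rw [mem_fixedAddSubgroup] at hv ⊢
  rw [smul_comm, hv]

theorem exists_trivial_stabilizer_of_abelian_general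
    (G V : Type*) [CommGroup G] [AddCommGroup V] [Finite V]
    [DistribMulAction G V] [FaithfulSMul G V]
    (ι : Type*) (W : ι → AddSubgroup V)
    (hinv : ∀ i, IsGInvariant G (W i))
    (hirr : ∀ i, IsIrreducibleGSub G (W i))
    (hindep : iSupIndep W)
    (hsup : (⨆ i, W i) = ⊤) :
    ∃ x : V, ∀ g : G, g • x = x → g = 1 := by
  have : Finite ι := finite_of_iSupIndep_of_ne_bot hindep fun i => (hirr i).1
  have : Fintype ι := Fintype.ofFinite ι
  choose x hxW hx0 using fun i => (hirr i).exists_ne_zero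
  refine ⟨∑ i, x i, fun g hg => ?_⟩
  have hfix := hindep.smul_eq_self_of_smul_sum_eq_sum hinv hxW Finset.univ hg
  exact eq_one_of_forall_le_fixedAddSubgroup hsup fun i =>
    (hirr i).le_of_mem_of_ne_zero (hinv i) (isGInvariant_fixedAddSubgroup g) (hxW i)
      (hfix i (Finset.mem_univ i)) (hx0 i)

/-- Let `G` be a finite abelian group acting faithfully on a finite
abelian group `V` by automorphisms, such that `V` is a direct sum of irreducible
`G`-submodules.  Then there exists `x ∈ V` whose stabiliser in `G` is trivial. -/
theorem exists_trivial_stabilizer_of_abelian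
    (G V : Type*) [CommGroup G] [Finite G] [AddCommGroup V] [Finite V]
    [DistribMulAction G V] [FaithfulSMul G V]
    (ι : Type*) (W : ι → AddSubgroup V)
    (hinv : ∀ i, IsGInvariant G (W i))
    (hirr : ∀ i, IsIrreducibleGSub G (W i))
    (hindep : iSupIndep W)
    (hsup : (⨆ i, W i) = ⊤) :
    ∃ x : V, ∀ g : G, g • x = x → g = 1 :=
  exists_trivial_stabilizer_of_abelian_general G V ι W hinv hirr hindep hsup
end

section
/- Let n = ab with a ≥ 4 and b = 2, and let G = Sym(n) act on the set Ω of partitions of {1,...,n} into a blocks of size 2. Then the minimal size of a base for this action is 3; that is, there exist three partitions in Ω whose common stabilizer in G is trivial, but no two partitions in Ω have trivial common stabilizer. -/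
/-!
A partition of a `2a`-set into pairs is the same as a fixed-point-free involution `m`, and a
permutation stabilises the partition exactly when it commutes with `m`.

Two partitions never suffice: the centraliser of `m` has order `2 ^ a * a!`, and
`(2a)! < (2 ^ a * a!) ^ 2`, so two such centralisers meet nontrivially (the index of an
intersection is at most the product of the indices).

Three do: on `ZMod (2a)` take the reflections `x ↦ 1 - x` and `x ↦ -1 - x`. Their product is
`x ↦ x + 2` and together they move `0` to every point, so a permutation commuting with both is
the identity as soon as it fixes `0`. The third involution `m₃` is `x ↦ 1 - x` with three of
its pairs next to `0` rewired so that `m₃ 0 = 2`; a permutation `g` commuting with all three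
satisfies `m₃ (g 0) = g 2 = g 0 + 2`, and a finite check shows that this forces `g 0 = 0`.
-/

/-- A permutation `g` of `Fin n` stabilises a finpartition `P` of `Fin n` if it maps
every block of `P` to a block of `P`. -/
def StabilizesPartition {n : ℕ} (g : Equiv.Perm (Fin n))
    (P : Finpartition (Finset.univ : Finset (Fin n))) : Prop :=
  ∀ B ∈ P.parts, B.image g ∈ P.parts

/-- A finpartition of `Fin n` into `a` blocks, each of size `b`. -/
def IsBlockPartition {n : ℕ} (a b : ℕ)
    (P : Finpartition (Finset.univ : Finset (Fin n))) : Prop :=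
  P.parts.card = a ∧ ∀ B ∈ P.parts, B.card = b

open Equiv Finset Nat

namespace Equiv.Perm

variable {α β : Type*}

def IsFixedPointFreeInvolution (m : Perm α) : Prop :=
  Function.Involutive m ∧ ∀ x, m x ≠ x

theorem commute_iff_forall_apply {g m : Perm α} : Commute g m ↔ ∀ x, g (m x) = m (g x) :=
  ⟨fun h x => DFunLike.congr_fun h x, fun h => Perm.ext h⟩

theorem sq_eq_one_of_involutive {m : Perm α} (hm : Function.Involutive m) : m ^ 2 = 1 := by
  ext x
  simp [sq, hm x]

theorem IsFixedPointFreeInvolution.permCongr {m : Perm α} (h : IsFixedPointFreeInvolution m)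
    (e : α ≃ β) : IsFixedPointFreeInvolution (e.permCongr m) := by
  refine ⟨fun x => by simp [h.1 _], fun x hx => h.2 (e.symm x) ?_⟩
  simpa using congrArg e.symm hx

variable [Fintype α] [DecidableEq α]

instance (m : Perm α) : DecidableRel (SameCycle.setoid m) :=
  inferInstanceAs (DecidableRel m.SameCycle)

def cycleFinpartition (m : Perm α) : Finpartition (univ : Finset α) :=
  Finpartition.ofSetoid (SameCycle.setoid m)

omit [DecidableEq α] in
theorem sameCycle_iff_of_involutive {m : Perm α} (hm : Function.Involutive m) {x y : α} :
    m.SameCycle x y ↔ y = x ∨ y = m x := by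
  refine ⟨fun h => ?_, ?_⟩
  · obtain ⟨i, hi, rfl⟩ := h.exists_pow_eq'
    have : i < 2 := hi.trans_le <| orderOf_le_of_pow_eq_one two_pos (sq_eq_one_of_involutive hm)
    interval_cases i <;> simp
  · rintro (rfl | rfl)
    · exact SameCycle.refl _ _
    · exact (SameCycle.refl _ _).apply_right

theorem part_cycleFinpartition {m : Perm α} (hm : Function.Involutive m) (x : α) :
    (cycleFinpartition m).part x = {x, m x} := by
  ext y
  rw [cycleFinpartition, Finpartition.mem_part_ofSetoid_iff_rel, mem_insert, mem_singleton]
  exact sameCycle_iff_of_involutive hm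

end Equiv.Perm

namespace Finpartition

open Equiv.Perm

variable {α : Type*} [Fintype α] [DecidableEq α]

theorem exists_part_eq_pair (P : Finpartition (univ : Finset α)) (h2 : ∀ B ∈ P.parts, #B = 2) :
    ∃ m : Perm α, IsFixedPointFreeInvolution m ∧ ∀ x, P.part x = {x, m x} := by
  have hpair : ∀ x, ∃ y, y ≠ x ∧ P.part x = {x, y} := by
    intro x
    obtain ⟨u, v, huv, huv'⟩ := card_eq_two.1 (h2 _ (P.part_mem.2 (mem_univ x)))
    have hx : x ∈ P.part x := P.mem_part_self.2 (mem_univ x)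
    rw [huv', mem_insert, mem_singleton] at hx
    rcases hx with rfl | rfl
    · exact ⟨v, huv.symm, huv'⟩
    · exact ⟨u, huv, huv'.trans (pair_comm _ _)⟩
  choose f hf using hpair
  have hinv : Function.Involutive f := by
    intro x
    have hpart : P.part (f x) = P.part x :=
      P.part_eq_of_mem (P.part_mem.2 (mem_univ x)) (by rw [(hf x).2]; simp)
    have hmem : f (f x) ∈ P.part x := by rw [← hpart, (hf _).2]; simp
    rw [(hf x).2, mem_insert, mem_singleton] at hmem
    exact hmem.resolve_right (hf _).1
  exact ⟨hinv.toPerm, ⟨hinv, fun x => (hf x).1⟩, fun x => (hf x).2⟩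

theorem exists_eq_pair_of_mem_parts {P : Finpartition (univ : Finset α)} {m : Perm α}
    (hP : ∀ x, P.part x = {x, m x}) {B : Finset α} (hB : B ∈ P.parts) : ∃ x, B = {x, m x} := by
  obtain ⟨x, hx⟩ := P.nonempty_of_mem_parts hB
  exact ⟨x, (hP x ▸ P.part_eq_of_mem hB hx).symm⟩

end Finpartition

section PairPartitions

open Equiv.Perm

theorem stabilizesPartition_iff_commute {n : ℕ} {P : Finpartition (univ : Finset (Fin n))}
    {m : Perm (Fin n)} (hP : ∀ x, P.part x = {x, m x}) (hm : ∀ x, m x ≠ x) {g : Perm (Fin n)} :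
    StabilizesPartition g P ↔ Commute g m := by
  rw [commute_iff_forall_apply]
  constructor
  · intro hs x
    have himage : ({g x, g (m x)} : Finset (Fin n)) ∈ P.parts := by
      simpa [hP] using hs _ (P.part_mem.2 (mem_univ x))
    have hpair : ({g x, g (m x)} : Finset (Fin n)) = {g x, m (g x)} :=
      hP (g x) ▸ (P.part_eq_of_mem himage (mem_insert_self _ _)).symm
    have hmem : g (m x) ∈ ({g x, m (g x)} : Finset (Fin n)) := hpair ▸ by simp
    rw [mem_insert, mem_singleton] at hmem
    exact hmem.resolve_left fun h => hm x (g.injective h)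
  · intro hc B hB
    obtain ⟨x, rfl⟩ := P.exists_eq_pair_of_mem_parts hP hB
    rw [image_insert, image_singleton, hc, ← hP]
    exact P.part_mem.2 (mem_univ _)

theorem isBlockPartition_of_part_eq_pair {a : ℕ} {P : Finpartition (univ : Finset (Fin (a * 2)))}
    {m : Perm (Fin (a * 2))} (hP : ∀ x, P.part x = {x, m x}) (hm : ∀ x, m x ≠ x) :
    IsBlockPartition a 2 P := by
  have h2 : ∀ B ∈ P.parts, #B = 2 := by
    intro B hB
    obtain ⟨x, rfl⟩ := P.exists_eq_pair_of_mem_parts hP hB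
    exact card_pair (hm x).symm
  have hsum := P.sum_card_parts
  rw [sum_congr rfl h2, sum_const, smul_eq_mul, Finset.card_univ, Fintype.card_fin] at hsum
  exact ⟨by omega, h2⟩

end PairPartitions

namespace Equiv.Perm.IsFixedPointFreeInvolution

variable {α : Type*} [Fintype α] [DecidableEq α] {m : Perm α} {a : ℕ}

theorem cycleType_eq (h : IsFixedPointFreeInvolution m) (hα : Fintype.card α = 2 * a) :
    m.cycleType = Multiset.replicate a 2 := by
  have hrep := cycleType_of_pow_prime_eq_one (sq_eq_one_of_involutive h.1)
  have hsupp : m.support = univ := eq_univ_of_forall fun x => mem_support.2 (h.2 x)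
  have hsum := m.sum_cycleType
  rw [hsupp, Finset.card_univ, hα, hrep, Multiset.sum_replicate, smul_eq_mul] at hsum
  rwa [show m.cycleType.card = a by omega] at hrep

theorem nat_card_centralizer (h : IsFixedPointFreeInvolution m) (hα : Fintype.card α = 2 * a) :
    Nat.card (Subgroup.centralizer {m}) = 2 ^ a * a ! := by
  rw [Perm.nat_card_centralizer, h.cycleType_eq hα]
  rcases eq_or_ne a 0 with rfl | ha
  · simp [hα]
  · simp [Multiset.toFinset_replicate, ha, hα, mul_comm]

end Equiv.Perm.IsFixedPointFreeInvolution

theorem Subgroup.inf_ne_bot_of_card_lt_card_mul_card {G : Type*} [Group G] [Finite G]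
    {H K : Subgroup G} (h : Nat.card G < Nat.card H * Nat.card K) : H ⊓ K ≠ ⊥ := by
  intro hbot
  have hinf : (H ⊓ K).index ≤ H.index * K.index := Subgroup.index_inf_le
  rw [hbot, Subgroup.index_bot] at hinf
  have hH := H.index_mul_card
  have hK := K.index_mul_card
  have hG : 0 < Nat.card G := Nat.card_pos
  nlinarith

theorem Nat.factorial_two_mul_lt_sq {a : ℕ} (ha : a ≠ 0) : (2 * a)! < (2 ^ a * a !) ^ 2 := by
  have h := Nat.choose_mul_factorial_mul_factorial (show a ≤ 2 * a by omega)
  rw [← Nat.centralBinom_eq_two_mul_choose, show 2 * a - a = a by omega] at h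
  calc (2 * a)! = a.centralBinom * (a ! * a !) := by rw [← h]; ring
    _ < 4 ^ a * (a ! * a !) :=
      Nat.mul_lt_mul_of_pos_right (Nat.centralBinom_lt_four_pow ha) (by positivity)
    _ = (2 ^ a * a !) ^ 2 := by rw [show 4 = 2 ^ 2 by rfl, ← pow_mul, mul_comm 2 a, pow_mul]; ring

theorem Equiv.Perm.exists_ne_one_commute_of_isFixedPointFreeInvolution {α : Type*} [Fintype α]
    [DecidableEq α] {a : ℕ} (ha : a ≠ 0) (hα : Fintype.card α = 2 * a) {m₁ m₂ : Perm α}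
    (h₁ : IsFixedPointFreeInvolution m₁) (h₂ : IsFixedPointFreeInvolution m₂) :
    ∃ g ≠ 1, Commute g m₁ ∧ Commute g m₂ := by
  have hcard : Nat.card (Perm α) <
      Nat.card (Subgroup.centralizer {m₁}) * Nat.card (Subgroup.centralizer {m₂}) := by
    rw [h₁.nat_card_centralizer hα, h₂.nat_card_centralizer hα, ← sq, Nat.card_perm,
      Nat.card_eq_fintype_card, hα]
    exact Nat.factorial_two_mul_lt_sq ha
  obtain ⟨g, hg⟩ := Subgroup.ne_bot_iff_exists_ne_one.1
    (Subgroup.inf_ne_bot_of_card_lt_card_mul_card hcard)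
  obtain ⟨hg₁, hg₂⟩ := Subgroup.mem_inf.1 g.2
  exact ⟨g, fun h => hg (Subtype.ext h), Subgroup.mem_centralizer_singleton_iff.1 hg₁,
    Subgroup.mem_centralizer_singleton_iff.1 hg₂⟩

section Reflections

open Equiv.Perm

variable {G : Type*} [AddCommGroup G]

theorem Equiv.isFixedPointFreeInvolution_subLeft {s : G} (hs : ∀ x, s ≠ x + x) :
    IsFixedPointFreeInvolution (Equiv.subLeft s) :=
  ⟨fun x => by simp, fun x hx => hs x (eq_add_of_sub_eq hx)⟩

theorem Equiv.Perm.apply_add_sub_of_commute_subLeft {g : Perm G} {s t : G}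
    (hs : Commute g (Equiv.subLeft s)) (ht : Commute g (Equiv.subLeft t)) (x : G) :
    g (x + (s - t)) = g x + (s - t) := by
  have h := commute_iff_forall_apply.1 hs (Equiv.subLeft t x)
  rw [commute_iff_forall_apply.1 ht] at h
  simp only [subLeft_apply] at h
  rwa [show s - (t - x) = x + (s - t) by abel, show s - (t - g x) = g x + (s - t) by abel] at h

theorem Equiv.Perm.apply_add_zsmul {g : Perm G} {d : G} (hd : ∀ x, g (x + d) = g x + d)
    (x : G) (k : ℤ) : g (x + k • d) = g x + k • d := by
  induction k using Int.induction_on generalizing x with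
  | zero => simp
  | succ k ih => rw [add_smul, one_smul, ← add_assoc, hd, ih, add_assoc]
  | pred k ih =>
    have h := hd (x + (-(k : ℤ) - 1) • d)
    rw [add_assoc, sub_smul, one_smul, sub_add_cancel, ih] at h
    rw [sub_smul, one_smul, eq_sub_of_add_eq h.symm]
    abel

end Reflections

namespace ZMod

open Equiv.Perm

variable {n : ℕ}

theorem one_ne_add_self (hn : 2 ∣ n) (x : ZMod n) : (1 : ZMod n) ≠ x + x := by
  intro h
  have h2 := congrArg (castHom hn (ZMod 2)) h
  rw [map_add, map_one] at h2
  revert h2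
  generalize castHom hn (ZMod 2) x = z
  revert z
  decide

theorem natCast_ne_zero_of_lt {k : ℕ} (hk : 0 < k) (hkn : k < n) : (k : ZMod n) ≠ 0 := by
  rw [Ne, natCast_eq_zero_iff]
  exact Nat.not_dvd_of_pos_of_lt hk hkn

theorem one_to_six_ne_zero (h7 : 7 ≤ n) :
    (1 : ZMod n) ≠ 0 ∧ (2 : ZMod n) ≠ 0 ∧ (3 : ZMod n) ≠ 0 ∧ (4 : ZMod n) ≠ 0 ∧
      (5 : ZMod n) ≠ 0 ∧ (6 : ZMod n) ≠ 0 := by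
  refine ⟨?_, ?_, ?_, ?_, ?_, ?_⟩
  · exact_mod_cast natCast_ne_zero_of_lt (k := 1) (by norm_num) (by omega)
  · exact_mod_cast natCast_ne_zero_of_lt (k := 2) (by norm_num) (by omega)
  · exact_mod_cast natCast_ne_zero_of_lt (k := 3) (by norm_num) (by omega)
  · exact_mod_cast natCast_ne_zero_of_lt (k := 4) (by norm_num) (by omega)
  · exact_mod_cast natCast_ne_zero_of_lt (k := 5) (by norm_num) (by omega)
  · exact_mod_cast natCast_ne_zero_of_lt (k := 6) (by norm_num) (by omega)

theorem eq_one_of_commute_subLeft_of_apply_zero {g : Perm (ZMod n)}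
    (h₁ : Commute g (Equiv.subLeft 1)) (h₂ : Commute g (Equiv.subLeft (-1))) (h₀ : g 0 = 0) :
    g = 1 := by
  have heven : ∀ j : ℤ, g (j * 2) = j * 2 := fun j => by
    have h := apply_add_zsmul (apply_add_sub_of_commute_subLeft h₁ h₂) 0 j
    rwa [h₀, zero_add, zsmul_eq_mul, sub_neg_eq_add, one_add_one_eq_two] at h
  ext z
  obtain ⟨k, rfl⟩ := intCast_surjective z
  obtain ⟨j, rfl | rfl⟩ := Int.even_or_odd' k
  · rw [show ((2 * j : ℤ) : ZMod n) = j * 2 by push_cast; ring, heven, Perm.one_apply]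
  · have h := commute_iff_forall_apply.1 h₁ ((-j : ℤ) * 2)
    rwa [heven, Equiv.subLeft_apply, show 1 - ((-j : ℤ) : ZMod n) * 2 = ((2 * j + 1 : ℤ) : ZMod n)
      by push_cast; ring] at h

/-- The reflection `x ↦ 1 - x` conjugated by the 3-cycle `(1 2 3)`: its pairs
`{0, 1}, {2, -1}, {3, -2}` become `{0, 2}, {3, -1}, {1, -2}`. -/
def rewiredReflection (n : ℕ) : Perm (ZMod n) :=
  (swap (2 : ZMod n) 3 * swap 1 2).symm.permCongr (Equiv.subLeft 1)

theorem isFixedPointFreeInvolution_rewiredReflection (hn : 2 ∣ n) :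
    IsFixedPointFreeInvolution (rewiredReflection n) :=
  (Equiv.isFixedPointFreeInvolution_subLeft (one_ne_add_self hn)).permCongr _

theorem rewiredReflection_zero (h7 : 7 ≤ n) : rewiredReflection n 0 = 2 := by
  obtain ⟨h1, h2, h3, -, -, -⟩ := one_to_six_ne_zero h7
  have h12 : (1 : ZMod n) ≠ 2 := fun h => h1 (by linear_combination -h)
  have h13 : (1 : ZMod n) ≠ 3 := fun h => h2 (by linear_combination -h)
  rw [rewiredReflection, Equiv.permCongr_apply, Equiv.symm_symm, Equiv.symm_apply_eq,
    Perm.mul_apply, Perm.mul_apply, swap_apply_of_ne_of_ne h1.symm h2.symm,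
    swap_apply_of_ne_of_ne h2.symm h3.symm, swap_apply_right, swap_apply_of_ne_of_ne h12 h13,
    Equiv.subLeft_apply, sub_zero]

theorem eq_zero_of_rewiredReflection_eq_add_two (hn : 2 ∣ n) (h7 : 7 ≤ n) {y : ZMod n}
    (h : rewiredReflection n y = y + 2) : y = 0 := by
  obtain ⟨h1, h2, h3, h4, h5, h6⟩ := one_to_six_ne_zero h7
  -- where the 3-cycle moves neither `y` nor `y + 2`, `h` reads `1 - y = y + 2`
  have hodd := one_ne_add_self hn (-y)
  rw [rewiredReflection, Equiv.permCongr_apply, Equiv.symm_symm, Equiv.symm_apply_eq] at h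
  simp only [Perm.mul_apply, swap_apply_def, Equiv.subLeft_apply] at h
  split_ifs at h <;> grind

theorem eq_one_of_commute_reflections (hn : 2 ∣ n) (h7 : 7 ≤ n) {g : Perm (ZMod n)}
    (h₁ : Commute g (Equiv.subLeft 1)) (h₂ : Commute g (Equiv.subLeft (-1)))
    (h₃ : Commute g (rewiredReflection n)) : g = 1 := by
  refine eq_one_of_commute_subLeft_of_apply_zero h₁ h₂
    (eq_zero_of_rewiredReflection_eq_add_two hn h7 ?_)
  have h := commute_iff_forall_apply.1 h₃ 0
  rwa [rewiredReflection_zero h7, show (2 : ZMod n) = 0 + (1 - -1) by ring,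
    apply_add_sub_of_commute_subLeft h₁ h₂, eq_comm, sub_neg_eq_add, one_add_one_eq_two] at h

end ZMod

theorem exists_three_isFixedPointFreeInvolution_eq_one_of_commute {n : ℕ} (hn : 2 ∣ n)
    (h7 : 7 ≤ n) :
    ∃ m₁ m₂ m₃ : Perm (Fin n), m₁.IsFixedPointFreeInvolution ∧
      m₂.IsFixedPointFreeInvolution ∧ m₃.IsFixedPointFreeInvolution ∧
      ∀ g : Perm (Fin n), Commute g m₁ → Commute g m₂ → Commute g m₃ → g = 1 := by
  have : NeZero n := ⟨by omega⟩
  let e : ZMod n ≃ Fin n := (ZMod.finEquiv n).symm.toEquiv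
  have hneg : ∀ x : ZMod n, -1 ≠ x + x := fun x h =>
    ZMod.one_ne_add_self hn (-x) (by rw [← neg_add, ← h, neg_neg])
  refine ⟨e.permCongrHom (Equiv.subLeft 1), e.permCongrHom (Equiv.subLeft (-1)),
    e.permCongrHom (ZMod.rewiredReflection n),
    (Equiv.isFixedPointFreeInvolution_subLeft (ZMod.one_ne_add_self hn)).permCongr e,
    (Equiv.isFixedPointFreeInvolution_subLeft hneg).permCongr e,
    (ZMod.isFixedPointFreeInvolution_rewiredReflection hn).permCongr e, fun g h₁ h₂ h₃ => ?_⟩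
  have hcomm : ∀ m, Commute g (e.permCongrHom m) → Commute (e.permCongrHom.symm g) m :=
    fun m h => e.permCongrHom.symm_apply_apply m ▸ h.map e.permCongrHom.symm
  exact (map_eq_one_iff _ e.permCongrHom.symm.injective).1 <|
    ZMod.eq_one_of_commute_reflections hn h7 (hcomm _ h₁) (hcomm _ h₂) (hcomm _ h₃)

/-- For `a ≥ 4` and `b = 2`, the symmetric group `Sym(2a)` acting on
partitions of `{1, …, 2a}` into `a` blocks of size `2` has base size exactly `3`:
there are three such partitions with trivial common stabiliser, but any two such
partitions have a nontrivial common stabiliser. -/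
theorem base_size_partitions_two_blocks (a : ℕ) (ha : 4 ≤ a) :
    (∃ P₁ P₂ P₃ : Finpartition (Finset.univ : Finset (Fin (a * 2))),
      IsBlockPartition a 2 P₁ ∧ IsBlockPartition a 2 P₂ ∧ IsBlockPartition a 2 P₃ ∧
      ∀ g : Equiv.Perm (Fin (a * 2)),
        StabilizesPartition g P₁ → StabilizesPartition g P₂ →
        StabilizesPartition g P₃ → g = 1) ∧
    (∀ P₁ P₂ : Finpartition (Finset.univ : Finset (Fin (a * 2))),
      IsBlockPartition a 2 P₁ → IsBlockPartition a 2 P₂ →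
      ∃ g : Equiv.Perm (Fin (a * 2)), g ≠ 1 ∧
        StabilizesPartition g P₁ ∧ StabilizesPartition g P₂) := by
  refine ⟨?_, fun P₁ P₂ hP₁ hP₂ => ?_⟩
  · obtain ⟨m₁, m₂, m₃, h₁, h₂, h₃, hrigid⟩ :=
      exists_three_isFixedPointFreeInvolution_eq_one_of_commute ⟨a, mul_comm a 2⟩ (by omega)
    have hpart {m : Perm (Fin (a * 2))} (hm : m.IsFixedPointFreeInvolution) :=
      Equiv.Perm.part_cycleFinpartition hm.1
    refine ⟨m₁.cycleFinpartition, m₂.cycleFinpartition, m₃.cycleFinpartition,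
      isBlockPartition_of_part_eq_pair (hpart h₁) h₁.2,
      isBlockPartition_of_part_eq_pair (hpart h₂) h₂.2,
      isBlockPartition_of_part_eq_pair (hpart h₃) h₃.2, fun g hs₁ hs₂ hs₃ => hrigid g ?_ ?_ ?_⟩
    · exact (stabilizesPartition_iff_commute (hpart h₁) h₁.2).1 hs₁
    · exact (stabilizesPartition_iff_commute (hpart h₂) h₂.2).1 hs₂
    · exact (stabilizesPartition_iff_commute (hpart h₃) h₃.2).1 hs₃
  · obtain ⟨m₁, h₁, hm₁⟩ := P₁.exists_part_eq_pair hP₁.2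
    obtain ⟨m₂, h₂, hm₂⟩ := P₂.exists_part_eq_pair hP₂.2
    obtain ⟨g, hg, hc₁, hc₂⟩ := Equiv.Perm.exists_ne_one_commute_of_isFixedPointFreeInvolution
      (a := a) (by omega) (by simp [mul_comm]) h₁ h₂
    exact ⟨g, hg, (stabilizesPartition_iff_commute hm₁ h₁.2).2 hc₁,
      (stabilizesPartition_iff_commute hm₂ h₂.2).2 hc₂⟩
end

section
/- Let G be a finite permutation group on a set Ω with point stabilizer H of a fixed point (G transitive). If the sum over representatives x_1,...,x_k of the conjugacy classes of elements of prime order in G of |x_i^G| · fpr(x_i)^c is strictly less than 1, where fpr(x) = |x^G ∩ H|/|x^G|, then G admits a base of size at most c on Ω. -/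
/-!
If no element of prime order fixes every entry of a `c`-tuple of points, the entries form a
base: a nontrivial element fixing them has a power of prime order that fixes them too. An element
`z` fixes `|fix z|^c` of the `|Ω|^c` tuples and `|fix z|` is a class function, so at most
`∑ᵢ |xᵢᴳ| · |fix xᵢ|^c` tuples are bad. Counting the pairs `(y, α)` with `y ∈ xᴳ` and
`y • α = α` in two ways gives `|xᴳ| · |fix x| = |Ω| · |xᴳ ∩ H|` when `G` is transitive, i.e.
`fpr(x) = |fix x| / |Ω|`, so the hypothesis puts the number of bad tuples below `|Ω|^c`.
-/

open MulAction

def IsBase (G : Type*) {Ω : Type*} [Group G] [MulAction G Ω] (s : Set Ω) : Prop :=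
  ∀ g : G, (∀ α ∈ s, g • α = α) → g = 1

lemma Set.ncard_univ_pi_const {α ι : Type*} [Fintype ι] (s : Set α) :
    (Set.univ.pi fun _ : ι => s).ncard = s.ncard ^ Fintype.card ι := by
  rw [← Nat.card_coe_set_eq, Nat.card_congr (Equiv.Set.univPi _), Nat.card_pi]
  simp

lemma MulAut.conj_image_conjugatesOf {G : Type*} [Group G] (u g : G) :
    MulAut.conj u '' conjugatesOf g = conjugatesOf g := by
  ext y
  simp only [Set.mem_image, MulAut.conj_apply, conjugatesOf, Set.mem_ofPred_eq]
  refine ⟨?_, fun h =>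
    ⟨u⁻¹ * y * u, h.trans (isConj_iff.mpr ⟨u⁻¹, by group⟩), by group⟩⟩
  rintro ⟨z, hz, rfl⟩
  exact hz.trans (isConj_iff.mpr ⟨u, rfl⟩)

lemma exists_prime_orderOf_pow {G : Type*} [Group G] [Finite G] {g : G} (hg : g ≠ 1) :
    ∃ n : ℕ, (orderOf (g ^ n)).Prime := by
  have hp := Nat.minFac_prime (mt orderOf_eq_one_iff.mp hg)
  exact ⟨orderOf g / (orderOf g).minFac,
    (orderOf_pow_orderOf_div (orderOf_pos g).ne' (Nat.minFac_dvd _)).symm ▸ hp⟩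

lemma sum_mul_pow_lt_of_sum_mul_div_pow_lt_one {ι : Type*} (s : Finset ι) (a b : ι → ℕ)
    {n c : ℕ} (hn : 0 < n) (h : ∑ i ∈ s, (a i : ℝ) * ((b i : ℝ) / n) ^ c < 1) :
    ∑ i ∈ s, a i * b i ^ c < n ^ c := by
  have hpow : (0 : ℝ) < (n : ℝ) ^ c := by positivity
  have hscaled := mul_lt_mul_of_pos_right h hpow
  rw [one_mul, Finset.sum_mul] at hscaled
  have hterm (i : ι) : (a i : ℝ) * ((b i : ℝ) / n) ^ c * (n : ℝ) ^ c = a i * b i ^ c := by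
    rw [div_pow, mul_assoc, div_mul_cancel₀ _ hpow.ne']
  simp only [hterm] at hscaled
  exact_mod_cast hscaled

section

variable {G Ω : Type*} [Group G] [MulAction G Ω]

lemma isBase_of_forall_prime_orderOf [Finite G] {s : Set Ω}
    (h : ∀ z : G, (orderOf z).Prime → ∃ α ∈ s, z • α ≠ α) : IsBase G s := by
  intro g hg
  by_contra hg1
  obtain ⟨n, hn⟩ := exists_prime_orderOf_pow hg1
  obtain ⟨α, hα, hmove⟩ := h _ hn
  exact hmove ((stabilizer G α).pow_mem (hg α hα) n)

lemma ncard_fixedBy_of_isConj {g y : G} (h : IsConj g y) :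
    (fixedBy Ω y).ncard = (fixedBy Ω g).ncard := by
  obtain ⟨u, rfl⟩ := isConj_iff.mp h
  rw [← smul_fixedBy, Set.ncard_smul_set]

lemma ncard_conjugatesOf_inter_stabilizer_smul (g u : G) (α : Ω) :
    (conjugatesOf g ∩ stabilizer G (u • α)).ncard =
      (conjugatesOf g ∩ stabilizer G α).ncard := by
  rw [stabilizer_smul_eq_stabilizer_map_conj, Subgroup.coe_map, MulEquiv.coe_toMonoidHom,
    ← MulAut.conj_image_conjugatesOf u g, ← Set.image_inter (MulAut.conj u).injective,
    Set.ncard_image_of_injective _ (MulAut.conj u).injective, MulAut.conj_image_conjugatesOf]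

theorem ncard_conjugatesOf_mul_ncard_fixedBy [Finite G] [Finite Ω] [IsPretransitive G Ω]
    (g : G) (ω : Ω) :
    (conjugatesOf g).ncard * (fixedBy Ω g).ncard =
      Nat.card Ω * (conjugatesOf g ∩ stabilizer G ω).ncard := by
  classical
  have := Fintype.ofFinite G
  have := Fintype.ofFinite Ω
  have hcount := Finset.sum_card_bipartiteAbove_eq_sum_card_bipartiteBelow
    (s := (conjugatesOf g).toFinset) (t := Finset.univ) (r := fun y (α : Ω) => y • α = α)
  have hfix (y : G) (hy : y ∈ (conjugatesOf g).toFinset) :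
      (Finset.univ.bipartiteAbove (fun y (α : Ω) => y • α = α) y).card =
        (fixedBy Ω g).ncard := by
    rw [← ncard_fixedBy_of_isConj (Set.mem_toFinset.mp hy : y ∈ conjugatesOf g),
      ← Set.ncard_coe_finset]
    congr 1; ext; simp [Finset.bipartiteAbove]
  have hstab (α : Ω) :
      ((conjugatesOf g).toFinset.bipartiteBelow (fun y (α : Ω) => y • α = α) α).card =
        (conjugatesOf g ∩ stabilizer G ω).ncard := by
    obtain ⟨u, rfl⟩ := exists_smul_eq G ω α
    rw [← ncard_conjugatesOf_inter_stabilizer_smul g u, ← Set.ncard_coe_finset]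
    congr 1; ext; simp [Finset.bipartiteBelow]
  rw [Finset.sum_congr rfl hfix, Finset.sum_congr rfl fun α _ => hstab α] at hcount
  simpa [Set.ncard_eq_toFinset_card'] using hcount

noncomputable def fixedPointRatio (g : G) (ω : Ω) : ℝ :=
  ((conjugatesOf g ∩ stabilizer G ω).ncard : ℝ) / (conjugatesOf g).ncard

theorem fixedPointRatio_eq_ncard_fixedBy_div [Finite G] [Finite Ω] [IsPretransitive G Ω]
    (g : G) (ω : Ω) :
    fixedPointRatio g ω = ((fixedBy Ω g).ncard : ℝ) / Nat.card Ω := by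
  have hΩ : (0 : ℝ) < Nat.card Ω := by
    have : Nonempty Ω := ⟨ω⟩
    exact_mod_cast Nat.card_pos
  have hC : (0 : ℝ) < (conjugatesOf g).ncard := by
    exact_mod_cast (Set.ncard_pos (Set.toFinite _)).mpr ⟨g, mem_conjugatesOf_self⟩
  have hcount := ncard_conjugatesOf_mul_ncard_fixedBy g ω
  rw [fixedPointRatio, div_eq_div_iff hC.ne' hΩ.ne']
  norm_cast
  linarith

theorem ncard_tuples_fixed_by_prime_orderOf_le [Finite G] [Finite Ω] {ι : Type*} [Fintype ι]
    (x : ι → G) (hrep : ∀ g : G, (orderOf g).Prime → ∃ i, IsConj (x i) g) (c : ℕ) :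
    {t : Fin c → Ω | ∃ z : G, (orderOf z).Prime ∧ ∀ j, z • t j = t j}.ncard ≤
      ∑ i, (conjugatesOf (x i)).ncard * (fixedBy Ω (x i)).ncard ^ c := by
  classical
  have := Fintype.ofFinite G
  let fixedTuples (z : G) : Set (Fin c → Ω) := Set.univ.pi fun _ => fixedBy Ω z
  have hcover : {t : Fin c → Ω | ∃ z : G, (orderOf z).Prime ∧ ∀ j, z • t j = t j} ⊆
      ⋃ i, ⋃ z ∈ (conjugatesOf (x i)).toFinset, fixedTuples z := by
    rintro t ⟨z, hz, hfix⟩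
    obtain ⟨i, hi⟩ := hrep z hz
    simp only [Set.mem_iUnion]
    exact ⟨i, z, Set.mem_toFinset.mpr hi, fun j _ => hfix j⟩
  have hclass (i : ι) : ∑ z ∈ (conjugatesOf (x i)).toFinset, (fixedTuples z).ncard =
      (conjugatesOf (x i)).ncard * (fixedBy Ω (x i)).ncard ^ c := by
    rw [Finset.sum_congr rfl fun z hz => by
      rw [Set.ncard_univ_pi_const, Fintype.card_fin,
        ncard_fixedBy_of_isConj (Set.mem_toFinset.mp hz : z ∈ conjugatesOf (x i))]]
    simp [Set.ncard_eq_toFinset_card']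
  calc _ ≤ (⋃ i, ⋃ z ∈ (conjugatesOf (x i)).toFinset, fixedTuples z).ncard :=
        Set.ncard_le_ncard hcover (Set.toFinite _)
    _ ≤ ∑ i, (⋃ z ∈ (conjugatesOf (x i)).toFinset, fixedTuples z).ncard :=
        Set.ncard_iUnion_le_of_fintype _
    _ ≤ ∑ i, ∑ z ∈ (conjugatesOf (x i)).toFinset, (fixedTuples z).ncard :=
        Finset.sum_le_sum fun i _ => Finset.set_ncard_biUnion_le _ _
    _ = _ := Finset.sum_congr rfl fun i _ => hclass i

theorem exists_isBase_of_sum_lt [Finite G] [Finite Ω] {ι : Type*} [Fintype ι] (x : ι → G)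
    (hrep : ∀ g : G, (orderOf g).Prime → ∃ i, IsConj (x i) g) {c : ℕ}
    (h : ∑ i, (conjugatesOf (x i)).ncard * (fixedBy Ω (x i)).ncard ^ c < Nat.card Ω ^ c) :
    ∃ s : Finset Ω, s.card ≤ c ∧ IsBase G (s : Set Ω) := by
  classical
  have hlt : {t : Fin c → Ω | ∃ z : G, (orderOf z).Prime ∧ ∀ j, z • t j = t j}.ncard <
      (Set.univ : Set (Fin c → Ω)).ncard := by
    rw [Set.ncard_univ, Nat.card_fun, Nat.card_fin]
    exact (ncard_tuples_fixed_by_prime_orderOf_le x hrep c).trans_lt h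
  obtain ⟨t, -, ht⟩ := Set.exists_mem_notMem_of_ncard_lt_ncard hlt
  refine ⟨Finset.univ.image t, Finset.card_image_le.trans (by simp),
    isBase_of_forall_prime_orderOf fun z hz => ?_⟩
  simp only [Set.mem_ofPred_eq, not_exists, not_and, not_forall] at ht
  obtain ⟨j, hj⟩ := ht z hz
  exact ⟨t j, by simp, hj⟩

end

theorem base_of_fixed_point_ratio_sum_lt_one_general
    {G Ω : Type*} [Group G] [Fintype G] [Fintype Ω] [MulAction G Ω]
    [MulAction.IsPretransitive G Ω]
    (ω : Ω) (c : ℕ) {k : ℕ} (x : Fin k → G)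
    (hrep : ∀ g : G, (orderOf g).Prime → ∃ i, IsConj (x i) g)
    (hsum : ∑ i : Fin k,
        (Nat.card {y : G | IsConj (x i) y} : ℝ) *
          ((Nat.card {y : G | IsConj (x i) y ∧ y ∈ MulAction.stabilizer G ω} : ℝ) /
            (Nat.card {y : G | IsConj (x i) y} : ℝ)) ^ c < 1) :
    ∃ s : Finset Ω, s.card ≤ c ∧
      ∀ g : G, (∀ α ∈ s, g • α = α) → g = 1 := by
  replace hsum :
      ∑ i, ((conjugatesOf (x i)).ncard : ℝ) * fixedPointRatio (x i) ω ^ c < 1 := hsum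
  simp only [fixedPointRatio_eq_ncard_fixedBy_div] at hsum
  have : Nonempty Ω := ⟨ω⟩
  exact exists_isBase_of_sum_lt x hrep
    (sum_mul_pow_lt_of_sum_mul_div_pow_lt_one _ _ _ Nat.card_pos hsum)

/-- the probabilistic base-size criterion of Liebeck–Shalev.
Let `G` be a finite transitive permutation group on `Ω` with point stabiliser
`H = G_ω`, and let `x₁, …, x_k` be representatives of the conjugacy classes of
elements of prime order in `G`.  If
`∑ i |xᵢᴳ| · (|xᵢᴳ ∩ H| / |xᵢᴳ|)^c < 1`, then `G` has a base of size at most `c`. -/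
theorem base_of_fixed_point_ratio_sum_lt_one
    {G Ω : Type*} [Group G] [Fintype G] [Fintype Ω] [MulAction G Ω]
    [MulAction.IsPretransitive G Ω]
    (ω : Ω) (c : ℕ) (hc : 0 < c) {k : ℕ} (x : Fin k → G)
    (hprime : ∀ i, (orderOf (x i)).Prime)
    (hdistinct : ∀ i j, i ≠ j → ¬ IsConj (x i) (x j))
    (hrep : ∀ g : G, (orderOf g).Prime → ∃ i, IsConj (x i) g)
    (hsum : ∑ i : Fin k,
        (Nat.card {y : G | IsConj (x i) y} : ℝ) *
          ((Nat.card {y : G | IsConj (x i) y ∧ y ∈ MulAction.stabilizer G ω} : ℝ) /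
            (Nat.card {y : G | IsConj (x i) y} : ℝ)) ^ c < 1) :
    ∃ s : Finset Ω, s.card ≤ c ∧
      ∀ g : G, (∀ α ∈ s, g • α = α) → g = 1 :=
  base_of_fixed_point_ratio_sum_lt_one_general ω c x hrep hsum
end

section
/- Let G be a finite group, H a subgroup, and suppose x_1,...,x_m are elements of G lying in pairwise distinct conjugacy classes with Σ_i |x_i^G ∩ H| ≤ A and |x_i^G| ≥ B for all i, where A, B > 0. Then for every positive integer c, Σ_{i=1}^m |x_i^G| · (|x_i^G ∩ H|/|x_i^G|)^c ≤ B · (A/B)^c. -/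
/-! Each term `n * (a / n)^c` equals `a * (a / n)^(c-1)`, and `a / n ≤ A / B` since `a ≤ A` and
`n ≥ B`; summing, the total is at most `(∑ a) * (A / B)^(c-1) ≤ A * (A / B)^(c-1) = B * (A / B)^c`. -/

section

variable {K : Type*} [Field K] [LinearOrder K] [IsStrictOrderedRing K]

theorem mul_div_pow_succ_le {a n A B : K} (ha : 0 ≤ a) (haA : a ≤ A) (hB : 0 < B) (hBn : B ≤ n)
    (k : ℕ) : n * (a / n) ^ (k + 1) ≤ a * (A / B) ^ k := by
  have hn : n ≠ 0 := (hB.trans_le hBn).ne'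
  have hratio : a / n ≤ A / B := div_le_div₀ (ha.trans haA) haA hB hBn
  calc n * (a / n) ^ (k + 1) = a * (a / n) ^ k := by rw [pow_succ]; field_simp
    _ ≤ a * (A / B) ^ k :=
      mul_le_mul_of_nonneg_left (pow_le_pow_left₀ (div_nonneg ha (hB.trans_le hBn).le) hratio k) ha

theorem sum_mul_div_pow_le {ι : Type*} (s : Finset ι) (a n : ι → K) {A B : K}
    (ha : ∀ i ∈ s, 0 ≤ a i) (hB : 0 < B) (hBn : ∀ i ∈ s, B ≤ n i) (hsum : ∑ i ∈ s, a i ≤ A)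
    {c : ℕ} (hc : 0 < c) :
    ∑ i ∈ s, n i * (a i / n i) ^ c ≤ B * (A / B) ^ c := by
  obtain ⟨k, rfl⟩ : ∃ k, c = k + 1 := ⟨c - 1, by omega⟩
  have hA : 0 ≤ A := (Finset.sum_nonneg ha).trans hsum
  have haA : ∀ i ∈ s, a i ≤ A := fun i hi => (Finset.single_le_sum ha hi).trans hsum
  calc ∑ i ∈ s, n i * (a i / n i) ^ (k + 1)
      ≤ ∑ i ∈ s, a i * (A / B) ^ k := Finset.sum_le_sum fun i hi =>
        mul_div_pow_succ_le (ha i hi) (haA i hi) hB (hBn i hi) k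
    _ = (∑ i ∈ s, a i) * (A / B) ^ k := (Finset.sum_mul ..).symm
    _ ≤ A * (A / B) ^ k := mul_le_mul_of_nonneg_right hsum (pow_nonneg (div_nonneg hA hB.le) k)
    _ = B * (A / B) ^ (k + 1) := by rw [pow_succ]; field_simp

end

theorem sum_class_fpr_pow_le_general
    {G : Type*} [Group G] (H : Subgroup G)
    {m : ℕ} (x : Fin m → G)
    (A B : ℝ) (hB : 0 < B)
    (hAbound : ∑ i : Fin m, (Nat.card {y : G | IsConj (x i) y ∧ y ∈ H} : ℝ) ≤ A)
    (hBbound : ∀ i, B ≤ (Nat.card {y : G | IsConj (x i) y} : ℝ))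
    (c : ℕ) (hc : 0 < c) :
    ∑ i : Fin m,
        (Nat.card {y : G | IsConj (x i) y} : ℝ) *
          ((Nat.card {y : G | IsConj (x i) y ∧ y ∈ H} : ℝ) /
            (Nat.card {y : G | IsConj (x i) y} : ℝ)) ^ c
      ≤ B * (A / B) ^ c :=
  sum_mul_div_pow_le Finset.univ _ _ (fun _ _ => Nat.cast_nonneg _) hB
    (fun i _ => hBbound i) hAbound hc

/-- Let `G` be a finite group, `H ≤ G`, and `x₁, …, x_m` elements of
`G` in pairwise distinct conjugacy classes with `∑ᵢ |xᵢᴳ ∩ H| ≤ A` and `|xᵢᴳ| ≥ B` for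
all `i`, where `A, B > 0`.  Then for every positive integer `c`,
`∑ᵢ |xᵢᴳ| · (|xᵢᴳ ∩ H| / |xᵢᴳ|)^c ≤ B · (A/B)^c`. -/
theorem sum_class_fpr_pow_le
    {G : Type*} [Group G] [Fintype G] (H : Subgroup G)
    {m : ℕ} (x : Fin m → G)
    (hdistinct : ∀ i j, i ≠ j → ¬ IsConj (x i) (x j))
    (A B : ℝ) (hA : 0 < A) (hB : 0 < B)
    (hAbound : ∑ i : Fin m, (Nat.card {y : G | IsConj (x i) y ∧ y ∈ H} : ℝ) ≤ A)
    (hBbound : ∀ i, B ≤ (Nat.card {y : G | IsConj (x i) y} : ℝ))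
    (c : ℕ) (hc : 0 < c) :
    ∑ i : Fin m,
        (Nat.card {y : G | IsConj (x i) y} : ℝ) *
          ((Nat.card {y : G | IsConj (x i) y ∧ y ∈ H} : ℝ) /
            (Nat.card {y : G | IsConj (x i) y} : ℝ)) ^ c
      ≤ B * (A / B) ^ c :=
  sum_class_fpr_pow_le_general H x A B hB hAbound hBbound c hc
end

section
/- Let H be a finite group, A a faithful irreducible H-module, t a positive integer, and G = A^t ⋊ H the semidirect product with the diagonal-component action. Then t ≤ α(G) ≤ t + dim_{End_H(A)}(A), where α(G) is the minimal number of maximal subgroups of G intersecting in Frat(G). -/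
/-!
The subgroups `Kᵢ = {g | g.left i = 0} ≅ A^{t-1} ⋊ H` are maximal because `A` is irreducible.
Conjugating `K_{i₀}` by `(0, …, a, …, 0)` gives a maximal subgroup meeting `H` in the stabiliser
of `a`. Taking `a` over a family spanning `A` over `End_H(A)`, these `t + d` maximal subgroups
intersect in the elements of `H` acting trivially on `A`, i.e. trivially. Hence `Frat(G) = 1` and
`α(G) ≤ t + d`.

Conversely, if `M` is maximal and `A^t ⊄ M`, some coordinate copy `Aᵢ ⊄ M`; as `Aᵢ` is normal,
`M Aᵢ = G`, so `A^t = (M ∩ A^t) + Aᵢ` and `|A^t : M ∩ A^t| ≤ |A|`. If `n` maximal subgroups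
intersect trivially, then `|A|^t ≤ ∏ |A^t : M ∩ A^t| ≤ |A|^n`.
-/

namespace Stmt11

/-- The action of `H` on `A` by additive automorphisms, packaged as a homomorphism
`H →* MulAut (Multiplicative A)`, used to form the semidirect product `A ⋊ H`. -/
def mulAutOfSMul (H A : Type*) [Group H] [AddCommGroup A] [DistribMulAction H A] :
    H →* MulAut (Multiplicative A) where
  toFun h :=
    { toFun := fun a => Multiplicative.ofAdd (h • a.toAdd)
      invFun := fun a => Multiplicative.ofAdd (h⁻¹ • a.toAdd)
      left_inv := fun a => by simp
      right_inv := fun a => by simp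
      map_mul' := fun a b => by simp [smul_add, ofAdd_add] }
  map_one' := by ext a; simp
  map_mul' g h := by ext a; simp [mul_smul]

/-- The intersection number `α(G)`: the minimal number of maximal subgroups of `G`
whose intersection is the Frattini subgroup. -/
noncomputable def interNum (G : Type*) [Group G] : ℕ :=
  sInf {n | ∃ T : Finset (Subgroup G), T.card = n ∧ (∀ H ∈ T, IsCoatom H) ∧
    T.inf id = frattini G}

open SemidirectProduct

def IsInvariant (H : Type*) {V : Type*} [SMul H V] [AddGroup V] (W : AddSubgroup V) : Prop :=
  ∀ h : H, ∀ v ∈ W, h • v ∈ W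

lemma interNum_le_card {G : Type*} [Group G] {T : Finset (Subgroup G)}
    (hT : ∀ M ∈ T, IsCoatom M) (hinf : T.inf id = frattini G) : interNum G ≤ T.card :=
  Nat.sInf_le ⟨T, rfl, hT, hinf⟩

lemma le_interNum {G : Type*} [Group G] {n : ℕ}
    (hne : ∃ T : Finset (Subgroup G), (∀ M ∈ T, IsCoatom M) ∧ T.inf id = frattini G)
    (h : ∀ T : Finset (Subgroup G), (∀ M ∈ T, IsCoatom M) → T.inf id = frattini G → n ≤ T.card) :
    n ≤ interNum G := by
  obtain ⟨T, hT, hinf⟩ := hne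
  exact le_csInf ⟨T.card, T, rfl, hT, hinf⟩ fun _ ⟨T', hcard, hT', hinf'⟩ => hcard ▸ h T' hT' hinf'

lemma frattini_eq_bot_of_finset_inf_eq_bot {G : Type*} [Group G] {T : Finset (Subgroup G)}
    (hT : ∀ M ∈ T, IsCoatom M) (hinf : T.inf id = ⊥) : frattini G = ⊥ :=
  eq_bot_iff.2 <| hinf ▸ Finset.le_inf fun M hM => frattini_le_coatom (hT M hM)

lemma index_le_card_of_sup_range_eq_top {B V : Type*} [AddGroup B] [AddCommGroup V] [Finite B]
    (f : B →+ V) {W : AddSubgroup V} (h : W ⊔ f.range = ⊤) : W.index ≤ Nat.card B := by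
  refine Nat.card_le_card_of_surjective (fun b => (f b : V ⧸ W)) fun y => ?_
  induction y using QuotientAddGroup.induction_on with | H v =>
  obtain ⟨w, hw, _, ⟨b, rfl⟩, rfl⟩ := AddSubgroup.mem_sup.1 (h ▸ AddSubgroup.mem_top v)
  exact ⟨b, (QuotientAddGroup.eq_iff_sub_mem.2 (by simpa using W.neg_mem hw)).symm⟩

lemma exists_range_single_not_le {ι A : Type*} [Fintype ι] [DecidableEq ι] [AddCommGroup A]
    {W : AddSubgroup (ι → A)} (hW : W ≠ ⊤) :
    ∃ i, ¬(AddMonoidHom.single (fun _ => A) i).range ≤ W := by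
  by_contra! h
  refine hW (eq_top_iff.2 fun v _ => ?_)
  rw [← Finset.univ_sum_single v]
  exact W.sum_mem fun i _ => h i ⟨v i, rfl⟩

lemma eq_one_of_forall_smul_eq_self {H A κ : Type*} [Group H] [AddCommGroup A]
    [DistribMulAction H A] [FaithfulSMul H A] [Fintype κ] {v : κ → A}
    (hspan : ∀ x : A, ∃ f : κ → (A →+ A),
      (∀ j, ∀ h : H, ∀ a : A, f j (h • a) = h • f j a) ∧ x = ∑ j, f j (v j))
    {h : H} (hfix : ∀ j, h • v j = v j) : h = 1 :=
  eq_of_smul_eq_smul fun a => by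
    obtain ⟨f, hf, rfl⟩ := hspan a
    simp [Finset.smul_sum, ← hf, hfix]

section Semidirect

variable {H V : Type*} [Group H] [AddCommGroup V] [DistribMulAction H V]

local notation "G" => Multiplicative V ⋊[mulAutOfSMul H V] H

lemma conj_inl_ofAdd (g : G) (v : V) :
    g * inl (.ofAdd v) * g⁻¹ = inl (.ofAdd (g.right • v)) := by
  ext
  · simp only [mul_left, inv_left, mul_right, left_inl, right_inl, mul_one, map_inv,
      MulAut.apply_inv_self, mul_inv_cancel_comm]
    rfl
  · simp [mul_right, inv_right]

/-- `L ∩ V`, as an additive subgroup of `V`. -/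
def baseSubgroup (L : Subgroup G) : AddSubgroup V :=
  Subgroup.toAddSubgroup' (L.comap inl)

lemma mem_baseSubgroup {L : Subgroup G} {v : V} :
    v ∈ baseSubgroup L ↔ (inl (.ofAdd v) : G) ∈ L :=
  Iff.rfl

lemma baseSubgroup_eq_top_iff {L : Subgroup G} :
    baseSubgroup L = ⊤ ↔ (inl : Multiplicative V →* G).range ≤ L := by
  rw [baseSubgroup, map_eq_top_iff, ← top_le_iff, ← Subgroup.map_le_iff_le_comap,
    ← MonoidHom.range_eq_map]

lemma isInvariant_baseSubgroup {L : Subgroup G} (hL : ∀ h : H, (inr h : G) ∈ L) :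
    IsInvariant H (baseSubgroup L) := fun h v hv => by
  rw [mem_baseSubgroup, ← right_inr (N := Multiplicative V) (φ := mulAutOfSMul H V) h,
    ← conj_inl_ofAdd]
  exact L.mul_mem (L.mul_mem (hL h) hv) (L.inv_mem (hL h))

def semidirectSubgroup (W : AddSubgroup V) (hW : IsInvariant H W) : Subgroup G where
  carrier := {g | g.left.toAdd ∈ W}
  one_mem' := W.zero_mem
  mul_mem' {a _} ha hb := W.add_mem ha (hW a.right _ hb)
  inv_mem' {a} ha := hW a.right⁻¹ _ (W.neg_mem ha)

variable {W : AddSubgroup V} {hW : IsInvariant H W}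

lemma mem_semidirectSubgroup {g : G} : g ∈ semidirectSubgroup W hW ↔ g.left.toAdd ∈ W :=
  Iff.rfl

lemma baseSubgroup_semidirectSubgroup : baseSubgroup (semidirectSubgroup W hW) = W :=
  rfl

lemma inr_mem_semidirectSubgroup (h : H) : (inr h : G) ∈ semidirectSubgroup W hW :=
  W.zero_mem

lemma isCoatom_semidirectSubgroup (hne : W ≠ ⊤)
    (hmax : ∀ W' : AddSubgroup V, IsInvariant H W' → W < W' → W' = ⊤) :
    IsCoatom (semidirectSubgroup W hW) := by
  refine ⟨fun htop => hne ?_, fun L hL => ?_⟩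
  · rw [← baseSubgroup_semidirectSubgroup (hW := hW), htop, baseSubgroup_eq_top_iff]
    exact le_top
  have hinr : ∀ h : H, (inr h : G) ∈ L := fun h => hL.le (inr_mem_semidirectSubgroup h)
  obtain ⟨x, hxL, hxW⟩ := SetLike.exists_of_lt hL
  have hx : x.left.toAdd ∈ baseSubgroup L := by
    rw [mem_baseSubgroup, ofAdd_toAdd, ← mul_inv_eq_iff_eq_mul.2 (inl_left_mul_inr_right x).symm]
    exact L.mul_mem hxL (L.inv_mem (hinr _))
  have hbase : baseSubgroup L = ⊤ := hmax _ (isInvariant_baseSubgroup hinr)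
    (SetLike.lt_iff_le_and_exists.2 ⟨fun v hv => hL.le hv, _, hx, hxW⟩)
  refine eq_top_iff.2 fun g _ => inl_left_mul_inr_right g ▸ L.mul_mem ?_ (hinr _)
  exact baseSubgroup_eq_top_iff.1 hbase ⟨_, rfl⟩

lemma normal_map_inl (hW : IsInvariant H W) :
    (W.toSubgroup.map (inl : Multiplicative V →* G)).Normal := by
  refine ⟨?_⟩
  rintro _ ⟨w, hw, rfl⟩ g
  rw [← ofAdd_toAdd w, conj_inl_ofAdd]
  exact ⟨_, hW _ _ hw, rfl⟩

lemma baseSubgroup_sup_eq_top (hW : IsInvariant H W) {M : Subgroup G}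
    (h : M ⊔ W.toSubgroup.map (inl : Multiplicative V →* G) = ⊤) :
    baseSubgroup M ⊔ W = ⊤ := by
  have := normal_map_inl hW
  refine eq_top_iff.2 fun v _ => ?_
  have hv : (inl (.ofAdd v) : G) ∈ ((M ⊔ W.toSubgroup.map inl : Subgroup G) : Set G) :=
    h ▸ Subgroup.mem_top _
  rw [Subgroup.mul_normal] at hv
  obtain ⟨m, hm, _, ⟨w, hw, rfl⟩, hmw⟩ := hv
  refine AddSubgroup.mem_sup.2 ⟨v - w.toAdd, ?_, w.toAdd, hw, sub_add_cancel _ _⟩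
  rwa [mem_baseSubgroup, ofAdd_sub, ofAdd_toAdd, div_eq_mul_inv, map_mul, map_inv,
    ← eq_mul_inv_of_mul_eq hmw]

end Semidirect

section Coordinates

variable {H ι A : Type*} [Group H] [AddCommGroup A] [DistribMulAction H A]

local notation "G" => Multiplicative (ι → A) ⋊[mulAutOfSMul H (ι → A)] H

lemma isInvariant_ker_eval (i : ι) : IsInvariant H (Pi.evalAddMonoidHom (fun _ => A) i).ker :=
  fun h v hv => by simp_all

lemma isInvariant_range_single [DecidableEq ι] (i : ι) :
    IsInvariant H (AddMonoidHom.single (fun _ => A) i).range := by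
  rintro h _ ⟨a, rfl⟩
  exact ⟨h • a, by simp [Pi.single_smul']⟩

lemma eq_top_of_ker_eval_lt (hirr : ∀ W : AddSubgroup A, IsInvariant H W → W = ⊥ ∨ W = ⊤)
    {i : ι} {W : AddSubgroup (ι → A)} (hW : IsInvariant H W)
    (hlt : (Pi.evalAddMonoidHom (fun _ => A) i).ker < W) : W = ⊤ := by
  have hproj : W.map (Pi.evalAddMonoidHom (fun _ => A) i) = ⊤ := by
    refine (hirr _ ?_).resolve_left fun hbot => ?_
    · rintro h _ ⟨w, hw, rfl⟩
      exact ⟨h • w, hW h w hw, rfl⟩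
    · obtain ⟨w, hw, hwi⟩ := SetLike.exists_of_lt hlt
      have : w i ∈ W.map (Pi.evalAddMonoidHom (fun _ => A) i) := ⟨w, hw, rfl⟩
      exact hwi (by simpa [hbot] using this)
  refine eq_top_iff.2 fun v _ => ?_
  obtain ⟨w, hw, hwv⟩ := hproj ▸ AddSubgroup.mem_top (v i)
  have : v - w ∈ W := hlt.le (by simp_all)
  simpa using W.add_mem this hw

variable (H) in
def kerEvalSemidirect (i : ι) : Subgroup G :=
  semidirectSubgroup _ (isInvariant_ker_eval (H := H) (A := A) i)

lemma isCoatom_kerEvalSemidirect [Nontrivial A]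
    (hirr : ∀ W : AddSubgroup A, IsInvariant H W → W = ⊥ ∨ W = ⊤) (i : ι) :
    IsCoatom (kerEvalSemidirect H (A := A) i) := by
  refine isCoatom_semidirectSubgroup (fun htop => ?_) fun _ hW hlt =>
    eq_top_of_ker_eval_lt hirr hW hlt
  obtain ⟨a, ha⟩ := exists_ne (0 : A)
  have : (fun _ => a) ∈ (Pi.evalAddMonoidHom (fun _ => A) i).ker := htop ▸ AddSubgroup.mem_top _
  exact ha this

lemma conj_inr_mem_kerEvalSemidirect_iff [DecidableEq ι] (i : ι) (a : A) (h : H) :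
    MulAut.conj (inl (.ofAdd (Pi.single i a))) (inr h) ∈ kerEvalSemidirect H i ↔ h • a = a := by
  rw [kerEvalSemidirect, mem_semidirectSubgroup, MulAut.conj_apply]
  simp only [mul_left, inv_left, mul_right, left_inl, right_inl, left_inr, right_inr]
  simp [mulAutOfSMul, ← sub_eq_add_neg, sub_eq_zero, eq_comm]

lemma index_baseSubgroup_le [Fintype ι] [DecidableEq ι] [Finite A] {M : Subgroup G}
    (hM : IsCoatom M) : (baseSubgroup M).index ≤ Nat.card A := by
  by_cases hle : (inl : Multiplicative (ι → A) →* G).range ≤ M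
  · rw [baseSubgroup_eq_top_iff.2 hle, AddSubgroup.index_top]
    exact Nat.card_pos
  obtain ⟨i, hi⟩ := exists_range_single_not_le (mt (baseSubgroup_eq_top_iff (L := M)).1 hle)
  have hsup : M ⊔ (AddMonoidHom.single (fun _ => A) i).range.toSubgroup.map inl = ⊤ :=
    hM.2 _ (left_lt_sup.2 fun h => hi fun v hv => h ⟨_, hv, rfl⟩)
  exact index_le_card_of_sup_range_eq_top _
    (baseSubgroup_sup_eq_top (isInvariant_range_single i) hsup)

lemma card_le_card_of_finset_inf_eq_bot [Fintype ι] [DecidableEq ι] [Finite A] [Nontrivial A]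
    {T : Finset (Subgroup G)} (hT : ∀ M ∈ T, IsCoatom M) (hinf : T.inf id = ⊥) :
    Fintype.card ι ≤ T.card := by
  have hbot : ⨅ M : T, baseSubgroup (M : Subgroup G) = ⊥ := by
    refine eq_bot_iff.2 fun v hv => ?_
    have : (inl (.ofAdd v) : G) ∈ T.inf id := by
      simp only [Finset.inf_eq_iInf, id, Subgroup.mem_iInf]
      exact fun M hM => AddSubgroup.mem_iInf.1 hv ⟨M, hM⟩
    rw [hinf, Subgroup.mem_bot, ← map_one inl, inl_inj] at this
    exact AddSubgroup.mem_bot.2 (ofAdd_eq_one.1 this)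
  have : Nat.card A ^ Fintype.card ι ≤ Nat.card A ^ T.card := calc
    Nat.card A ^ Fintype.card ι = (⊥ : AddSubgroup (ι → A)).index := by
      rw [AddSubgroup.index_bot, Nat.card_fun, Nat.card_eq_fintype_card (α := ι)]
    _ = (⨅ M : T, baseSubgroup (M : Subgroup G)).index := by rw [hbot]
    _ ≤ ∏ M : T, (baseSubgroup (M : Subgroup G)).index := AddSubgroup.index_iInf_le _
    _ ≤ ∏ _M : T, Nat.card A := Finset.prod_le_prod' fun M _ => index_baseSubgroup_le (hT M M.2)
    _ = Nat.card A ^ T.card := by simp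
  exact (Nat.pow_le_pow_iff_right Finite.one_lt_card).1 this

lemma exists_coatoms_inf_eq_bot [Fintype ι] [DecidableEq ι] [Nontrivial A] {κ : Type*}
    [Fintype κ] (hirr : ∀ W : AddSubgroup A, IsInvariant H W → W = ⊥ ∨ W = ⊤) (v : κ → A)
    (hv : ∀ h : H, (∀ j, h • v j = v j) → h = 1) (i₀ : ι) :
    ∃ T : Finset (Subgroup G), (∀ M ∈ T, IsCoatom M) ∧ T.inf id = ⊥ ∧
      T.card ≤ Fintype.card ι + Fintype.card κ := by
  classical
  let C (j : κ) : Subgroup G := MulEquiv.comapSubgroup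
    (MulAut.conj (inl (.ofAdd (Pi.single i₀ (v j))))) (kerEvalSemidirect H i₀)
  refine ⟨Finset.univ.image (kerEvalSemidirect H) ∪ Finset.univ.image C, ?_, ?_, ?_⟩
  · simp only [Finset.mem_union, Finset.mem_image, Finset.mem_univ, true_and]
    rintro _ (⟨i, rfl⟩ | ⟨j, rfl⟩)
    · exact isCoatom_kerEvalSemidirect hirr i
    · exact (OrderIso.isCoatom_iff _ _).2 (isCoatom_kerEvalSemidirect hirr i₀)
  · refine eq_bot_iff.2 fun g hg => ?_
    have hmem : ∀ M ∈ Finset.univ.image (kerEvalSemidirect H) ∪ Finset.univ.image C, g ∈ M :=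
      fun M hM => Finset.inf_le (f := id) hM hg
    have hleft : g.left = 1 := funext fun i =>
      hmem _ (Finset.mem_union_left _ (Finset.mem_image_of_mem _ (Finset.mem_univ i)))
    have hg : g = inr g.right := by
      simpa [hleft] using (inl_left_mul_inr_right g).symm
    have hright : g.right = 1 := hv _ fun j => by
      have := hmem _ (Finset.mem_union_right _ (Finset.mem_image_of_mem C (Finset.mem_univ j)))
      rw [hg] at this
      exact (conj_inr_mem_kerEvalSemidirect_iff i₀ (v j) g.right).1 this
    rw [Subgroup.mem_bot, hg, hright, map_one]
  · refine (Finset.card_union_le _ _).trans (add_le_add ?_ ?_) <;>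
      exact Finset.card_image_le.trans (by simp)

end Coordinates

theorem t_le_interNum_le_t_add_dim_general
    (H A : Type*) [Group H] [AddCommGroup A] [Finite A] [Nontrivial A]
    [DistribMulAction H A] [FaithfulSMul H A]
    (hirr : ∀ W : AddSubgroup A, (∀ h : H, ∀ a ∈ W, h • a ∈ W) → W = ⊥ ∨ W = ⊤)
    (t : ℕ) (ht : 1 ≤ t)
    (d : ℕ) (v : Fin d → A)
    (hspan : ∀ x : A, ∃ f : Fin d → (A →+ A),
      (∀ i, ∀ h : H, ∀ a : A, f i (h • a) = h • f i a) ∧ x = ∑ i, f i (v i)) :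
    t ≤ interNum (Multiplicative (Fin t → A) ⋊[mulAutOfSMul H (Fin t → A)] H) ∧
      interNum (Multiplicative (Fin t → A) ⋊[mulAutOfSMul H (Fin t → A)] H) ≤ t + d := by
  obtain ⟨T, hTco, hTbot, hTcard⟩ := exists_coatoms_inf_eq_bot hirr v
    (fun _ => eq_one_of_forall_smul_eq_self hspan) (⟨0, ht⟩ : Fin t)
  have hfr := frattini_eq_bot_of_finset_inf_eq_bot hTco hTbot
  refine ⟨le_interNum ⟨T, hTco, hTbot.trans hfr.symm⟩ fun T' hco hinf => ?_, ?_⟩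
  · simpa using card_le_card_of_finset_inf_eq_bot hco (hinf.trans hfr)
  · simpa using (interNum_le_card hTco (hTbot.trans hfr.symm)).trans hTcard

/-- Let `H` be a finite group, `A` a finite faithful irreducible
`H`-module, `t ≥ 1`, and `G = A^t ⋊ H` the semidirect product with the componentwise
action.  Then `t ≤ α(G) ≤ t + dim_{End_H(A)}(A)`, where the dimension is witnessed by
a spanning family `v : Fin d → A` of `A` over the endomorphism ring `End_H(A)`. -/
theorem t_le_interNum_le_t_add_dim
    (H A : Type*) [Group H] [Finite H] [AddCommGroup A] [Finite A] [Nontrivial A]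
    [DistribMulAction H A] [FaithfulSMul H A]
    (hirr : ∀ W : AddSubgroup A, (∀ h : H, ∀ a ∈ W, h • a ∈ W) → W = ⊥ ∨ W = ⊤)
    (t : ℕ) (ht : 1 ≤ t)
    (d : ℕ) (v : Fin d → A)
    (hspan : ∀ x : A, ∃ f : Fin d → (A →+ A),
      (∀ i, ∀ h : H, ∀ a : A, f i (h • a) = h • f i a) ∧ x = ∑ i, f i (v i)) :
    t ≤ interNum (Multiplicative (Fin t → A) ⋊[mulAutOfSMul H (Fin t → A)] H) ∧
      interNum (Multiplicative (Fin t → A) ⋊[mulAutOfSMul H (Fin t → A)] H) ≤ t + d :=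
  t_le_interNum_le_t_add_dim_general H A hirr t ht d v hspan

end Stmt11
end
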